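/- For every natural number n, the n-th stage of the middle-thirds construction on [1,2] is the union of the 2^n closed intervals encoded by s: I n = ⋃_{k=0}^{2^n−1} Set.Icc (1 + (s k)/3^n) (1 + (s k + 1)/3^n). -/
import Mathlib


noncomputable section

/-- `s k = Σᵢ 2·tᵢ·3ⁱ` where `k = Σᵢ tᵢ·2ⁱ` is the binary expansion of `k`;
equivalently `s 0 = 0`, `s (2j) = 3·(s j)`, `s (2j+1) = 3·(s j) + 2`. -/
def s : ℕ → ℕ
  | 0 => 0
  | k + 1 =>
    if (k + 1) % 2 = 0 then 3 * s ((k + 1) / 2)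
    else 3 * s ((k + 1) / 2) + 2
decreasing_by all_goals (simp_wf; omega)

/-- The `n`-th stage of the middle-thirds (Cantor set) construction on `[1,2]`. -/
def Istage : ℕ → Set ℝ
  | 0 => Set.Icc 1 2
  | n + 1 => ((fun x => (x + 2) / 3) '' Istage n) ∪ ((fun x => (x + 4) / 3) '' Istage n)

lemma s_even (j : ℕ) : s (2 * j) = 3 * s j := by
  cases j with
  | zero => show s 0 = 3 * s 0; rw [s]
  | succ m =>
    rw [show 2 * (m + 1) = (2 * m + 1) + 1 by ring, s]
    have h : (2 * m + 1 + 1) % 2 = 0 := by omega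
    have h2 : (2 * m + 1 + 1) / 2 = m + 1 := by omega
    rw [if_pos h, h2]

lemma s_odd (j : ℕ) : s (2 * j + 1) = 3 * s j + 2 := by
  rw [show 2 * j + 1 = (2 * j) + 1 by ring, s]
  have h : ¬ ((2 * j + 1) % 2 = 0) := by omega
  have h2 : (2 * j + 1) / 2 = j := by omega
  rw [if_neg h, h2]

lemma s_add_pow : ∀ n k, k < 2 ^ n → s (k + 2 ^ n) = s k + 2 * 3 ^ n := by
  intro n
  induction n with
  | zero =>
    intro k hk
    interval_cases k
    have h1 := s_odd 0
    have h0 : s 0 = 0 := by rw [s]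
    simp [h0] at h1 ⊢
    omega
  | succ n ih =>
    intro k hk
    rcases Nat.even_or_odd k with ⟨j, hj⟩ | ⟨j, hj⟩
    · subst hj
      have h2 : j + j + 2 ^ (n + 1) = 2 * (j + 2 ^ n) := by ring
      rw [h2, s_even, ih j (by omega), show j + j = 2 * j by ring, s_even]
      ring
    · subst hj
      have h2 : (2 * j + 1) + 2 ^ (n + 1) = 2 * (j + 2 ^ n) + 1 := by ring
      rw [h2, s_odd, ih j (by omega), s_odd]
      ring

lemma image_Icc (c a b : ℝ) (hab : a ≤ b) :
    (fun x => (x + c) / 3) '' Set.Icc a b = Set.Icc ((a + c) / 3) ((b + c) / 3) := by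
  ext y
  constructor
  · rintro ⟨x, hx, rfl⟩
    exact ⟨by linarith [hx.1], by linarith [hx.2]⟩
  · intro hy
    exact ⟨3 * y - c, ⟨by linarith [hy.1], by linarith [hy.2]⟩, by ring⟩

/-- The `n`-th stage of the middle-thirds construction on `[1,2]` is the union of the `2^n`
closed intervals encoded by `s`. -/
theorem stmt_0 (n : ℕ) :
    Istage n = ⋃ k ∈ Finset.range (2 ^ n),
      Set.Icc (1 + (s k : ℝ) / 3 ^ n) (1 + ((s k : ℝ) + 1) / 3 ^ n) := by
  induction n with
  | zero =>
    simp [Istage, s]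
    norm_num
  | succ n ih =>
    rw [show Istage (n + 1) = ((fun x => (x + 2) / 3) '' Istage n) ∪
        ((fun x => (x + 4) / 3) '' Istage n) from rfl, ih]
    have h3 : (0:ℝ) < 3 ^ n := by positivity
    ext x
    simp only [Set.mem_union, Set.mem_iUnion, Finset.mem_range, Set.image_iUnion,
      exists_prop]
    have key : ∀ (k : ℕ) (c : ℝ),
        (fun x => (x + c) / 3) '' Set.Icc (1 + (s k : ℝ) / 3 ^ n) (1 + ((s k : ℝ) + 1) / 3 ^ n)
        = Set.Icc ((1 + (s k : ℝ) / 3 ^ n + c) / 3) ((1 + ((s k : ℝ) + 1) / 3 ^ n + c) / 3) := by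
      intro k c
      apply image_Icc
      gcongr
      linarith
    simp only [key]
    constructor
    · rintro (⟨k, hk, hx⟩ | ⟨k, hk, hx⟩)
      · refine ⟨k, by omega, ?_⟩
        convert hx using 2 <;> · push_cast [pow_succ]; field_simp; ring
      · refine ⟨k + 2 ^ n, by omega, ?_⟩
        rw [s_add_pow n k hk]
        convert hx using 2 <;> · push_cast [pow_succ]; field_simp; ring
    · rintro ⟨k, hk, hx⟩
      by_cases hkn : k < 2 ^ n
      · left
        refine ⟨k, hkn, ?_⟩
        convert hx using 2 <;> · push_cast [pow_succ]; field_simp; ring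
      · right
        obtain ⟨j, hj, rfl⟩ : ∃ j, j < 2 ^ n ∧ k = j + 2 ^ n :=
          ⟨k - 2 ^ n, by omega, by omega⟩
        refine ⟨j, hj, ?_⟩
        rw [s_add_pow n j hj] at hx
        convert hx using 2 <;> · push_cast [pow_succ]; field_simp; ring
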